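/- arXiv:1911.10405 — 2 statements merged into one kernel-verified Lean document; each statement's English description precedes it below -/
import Mathlib

section
/- (Iwahori Approximation, Proposition 4.2, type A_{n−1} instance.) Fix w ∈ S_n and μ ∈ ℤⁿ. There exists N ∈ ℕ such that for every λ = (λ_1,…,λ_n) ∈ ℤⁿ with λ_i − λ_{i+1} ≥ N for all 1 ≤ i ≤ n−1, one has the equality of subsets of G: I⁻·π^{λ}·U⁻ ∩ I⁻·w·π^{λ−μ}·U⁺ = I⁻·π^{λ}·U⁻_O ∩ I⁻·w·π^{λ−μ}·U⁺, where U⁻_O = U⁻ ∩ K. -/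
open Matrix Pointwise

noncomputable section

/-- `π^μ = diag(p^{μ_1},…,p^{μ_n})` as an element of `GL_n(ℚ_p)`. -/
def piPow (p : ℕ) [Fact p.Prime] (n : ℕ) (μ : Fin n → ℤ) : GL (Fin n) ℚ_[p] where
  val := diagonal fun i => (p : ℚ_[p]) ^ (μ i)
  inv := diagonal fun i => (p : ℚ_[p]) ^ (-μ i)
  val_inv := by
    have hp : (p : ℚ_[p]) ≠ 0 := Nat.cast_ne_zero.mpr (Fact.out : p.Prime).ne_zero
    rw [diagonal_mul_diagonal]
    have h : (fun i => (p : ℚ_[p]) ^ (μ i) * (p : ℚ_[p]) ^ (-μ i)) = fun _ => (1 : ℚ_[p]) := by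
      funext i; rw [← zpow_add₀ hp]; simp
    rw [h, diagonal_one]
  inv_val := by
    have hp : (p : ℚ_[p]) ≠ 0 := Nat.cast_ne_zero.mpr (Fact.out : p.Prime).ne_zero
    rw [diagonal_mul_diagonal]
    have h : (fun i => (p : ℚ_[p]) ^ (-μ i) * (p : ℚ_[p]) ^ (μ i)) = fun _ => (1 : ℚ_[p]) := by
      funext i; rw [← zpow_add₀ hp]; simp
    rw [h, diagonal_one]

/-- `K = GL_n(ℤ_p)`: matrices with entries in `ℤ_p` whose determinant is a unit of `ℤ_p`. -/
def Kgp (p : ℕ) [Fact p.Prime] (n : ℕ) : Set (GL (Fin n) ℚ_[p]) :=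
  {g | (∀ i j, ‖(g : Matrix (Fin n) (Fin n) ℚ_[p]) i j‖ ≤ 1) ∧
    ‖(g : Matrix (Fin n) (Fin n) ℚ_[p]).det‖ = 1}

/-- `U⁺`: upper triangular unipotent matrices. -/
def Uplus (p : ℕ) [Fact p.Prime] (n : ℕ) : Set (GL (Fin n) ℚ_[p]) :=
  {g | (∀ i, (g : Matrix (Fin n) (Fin n) ℚ_[p]) i i = 1) ∧
    ∀ i j : Fin n, j < i → (g : Matrix (Fin n) (Fin n) ℚ_[p]) i j = 0}

/-- `U⁻`: lower triangular unipotent matrices. -/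
def Uminus (p : ℕ) [Fact p.Prime] (n : ℕ) : Set (GL (Fin n) ℚ_[p]) :=
  {g | (∀ i, (g : Matrix (Fin n) (Fin n) ℚ_[p]) i i = 1) ∧
    ∀ i j : Fin n, i < j → (g : Matrix (Fin n) (Fin n) ℚ_[p]) i j = 0}

/-- The simple coroot `e_i − e_{i+1}` (0-indexed `i`), as a vector in `ℤⁿ`. -/
def simpleCoroot (n : ℕ) (i : ℕ) : Fin n → ℤ :=
  fun j => (if (j : ℕ) = i then 1 else 0) - (if (j : ℕ) = i + 1 then 1 else 0)

/-- Dominance order: `μ ≤ λ` iff `λ − μ` is a nonnegative integral combination of the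
simple coroots `e_i − e_{i+1}`, `1 ≤ i ≤ n−1`. -/
def domLE (n : ℕ) (μ lam : Fin n → ℤ) : Prop :=
  ∃ c : ℕ → ℕ,
    (fun j => lam j - μ j) = ∑ i ∈ Finset.range (n - 1), fun j => (c i : ℤ) * simpleCoroot n i j

/-- The permutation matrix of `w ∈ S_n` as an element of `GL_n(ℚ_p)`; the assignment
`w ↦ permGL p n w` is a group embedding of `S_n` into `GL_n(ℚ_p)`. -/
def permGL (p : ℕ) [Fact p.Prime] (n : ℕ) (w : Equiv.Perm (Fin n)) : GL (Fin n) ℚ_[p] where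
  val := (w⁻¹).permMatrix ℚ_[p]
  inv := w.permMatrix ℚ_[p]
  val_inv := by
    show ((w⁻¹).toPEquiv.toMatrix : Matrix (Fin n) (Fin n) ℚ_[p]) * w.toPEquiv.toMatrix = 1
    rw [← PEquiv.toMatrix_trans, ← Equiv.toPEquiv_trans]
    have h : Equiv.trans w⁻¹ w = Equiv.refl (Fin n) := by ext x; simp
    rw [h, Equiv.toPEquiv_refl, PEquiv.toMatrix_refl]
  inv_val := by
    show (w.toPEquiv.toMatrix : Matrix (Fin n) (Fin n) ℚ_[p]) * (w⁻¹).toPEquiv.toMatrix = 1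
    rw [← PEquiv.toMatrix_trans, ← Equiv.toPEquiv_trans]
    have h : Equiv.trans w w⁻¹ = Equiv.refl (Fin n) := by ext x; simp
    rw [h, Equiv.toPEquiv_refl, PEquiv.toMatrix_refl]

/-- Coxeter length of a permutation: the number of inversions. -/
def permLength (n : ℕ) (w : Equiv.Perm (Fin n)) : ℕ :=
  ((Finset.univ : Finset (Fin n × Fin n)).filter fun q => q.1 < q.2 ∧ w q.2 < w q.1).card

end

/-- The opposite Iwahori subgroup `I⁻ = {g ∈ K : g mod p is lower triangular}`. -/
def Iminus (p : ℕ) [Fact p.Prime] (n : ℕ) : Set (GL (Fin n) ℚ_[p]) :=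
  {g | g ∈ Kgp p n ∧
    ∀ i j : Fin n, i < j → ‖(g : Matrix (Fin n) (Fin n) ℚ_[p]) i j‖ ≤ (p : ℝ)⁻¹}

/-!
Write `x = a π^λ u = b w π^{λ-μ} v` with `a, b ∈ I⁻`, `u ∈ U⁻`, `v ∈ U⁺`. Then
`u v⁻¹ = π^{-λ} k w π^{λ-μ}` with `k = a⁻¹ b ∈ K`, so `‖(u v⁻¹)_{st}‖ ≤ p^{λ_s + μ_t - λ_t}`.
Since `u` is lower and `v⁻¹` upper unitriangular, `u_{ij}` is the minor of `u v⁻¹` on rows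
`0, …, j-1, i` and columns `0, …, j`, and the ultrametric bound on this determinant is
`p^{λ_i - λ_j + μ_0 + ⋯ + μ_j}`. For `j < i` this is at most `1` as soon as every gap
`λ_j - λ_{j+1}` is at least `∑ |μ_t|`, so `u ∈ U⁻ ∩ K`.
-/

theorem Finset.prod_zpow_eq_zpow_sum₀ {ι G₀ : Type*} [CommGroupWithZero G₀] {a : G₀}
    (ha : a ≠ 0) (s : Finset ι) (e : ι → ℤ) : ∏ t ∈ s, a ^ e t = a ^ ∑ t ∈ s, e t := by
  classical
  induction s using Finset.induction with
  | empty => simp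
  | insert t s hts ih => rw [prod_insert hts, sum_insert hts, ih, zpow_add₀ ha]

theorem le_sub_of_lt_of_forall_succ {n : ℕ} {N : ℤ} (hN : 0 ≤ N) {f : Fin n → ℤ}
    (hf : ∀ i j : Fin n, (j : ℕ) = i + 1 → N ≤ f i - f j) {i j : Fin n} (hij : i < j) :
    N ≤ f i - f j := by
  obtain ⟨j, hj⟩ := j
  induction j with
  | zero => exact absurd (Fin.lt_def.1 hij) (Nat.not_lt_zero _)
  | succ j ih =>
    have hstep := hf ⟨j, by omega⟩ ⟨j + 1, hj⟩ rfl
    rcases Nat.lt_succ_iff_lt_or_eq.1 (Fin.lt_def.1 hij) with h | h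
    · have := ih (by omega) (Fin.lt_def.2 h)
      linarith
    · rwa [show i = ⟨j, by omega⟩ from Fin.ext h]

namespace Matrix

section Ultrametric

variable {𝕜 : Type*} [NormedField 𝕜] [IsUltrametricDist 𝕜] {m : Type*} [Fintype m]

theorem norm_det_le_prod_mul_prod [DecidableEq m] (A : Matrix m m 𝕜) {f g : m → ℝ}
    (hf : ∀ a, 0 ≤ f a) (hg : ∀ b, 0 ≤ g b) (h : ∀ a b, ‖A a b‖ ≤ f a * g b) :
    ‖A.det‖ ≤ (∏ a, f a) * ∏ b, g b := by
  rw [det_apply]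
  refine IsUltrametricDist.norm_sum_le_of_forall_le_of_nonneg
    (mul_nonneg (Finset.prod_nonneg fun a _ => hf a) (Finset.prod_nonneg fun b _ => hg b))
    fun σ _ => ?_
  calc ‖Equiv.Perm.sign σ • ∏ i, A (σ i) i‖ = ∏ i, ‖A (σ i) i‖ := by
        rw [norm_units_zsmul, norm_prod]
    _ ≤ ∏ i, f (σ i) * g i := Finset.prod_le_prod (fun i _ => norm_nonneg _) fun i _ => h _ _
    _ = (∏ a, f a) * ∏ b, g b := by rw [Finset.prod_mul_distrib, Equiv.prod_comp σ f]

theorem norm_det_le_one [DecidableEq m] {A : Matrix m m 𝕜} (h : ∀ i j, ‖A i j‖ ≤ 1) :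
    ‖A.det‖ ≤ 1 := by
  simpa using A.norm_det_le_prod_mul_prod (f := 1) (g := 1) (fun _ => zero_le_one)
    (fun _ => zero_le_one) (by simpa using h)

theorem norm_mul_apply_le_one {A B : Matrix m m 𝕜} (hA : ∀ i j, ‖A i j‖ ≤ 1)
    (hB : ∀ i j, ‖B i j‖ ≤ 1) (i j : m) : ‖(A * B) i j‖ ≤ 1 :=
  IsUltrametricDist.norm_sum_le_of_forall_le_of_nonneg zero_le_one fun k _ => by
    rw [norm_mul]
    exact mul_le_one₀ (hA i k) (norm_nonneg _) (hB k j)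

theorem norm_inv_apply_le_one [DecidableEq m] {A : Matrix m m 𝕜} (hA : ∀ i j, ‖A i j‖ ≤ 1)
    (hdet : ‖A.det‖ = 1) (i j : m) : ‖A⁻¹ i j‖ ≤ 1 := by
  rw [inv_def, smul_apply, smul_eq_mul, norm_mul, Ring.inverse_eq_inv', norm_inv, hdet, inv_one,
    one_mul, adjugate_apply]
  refine norm_det_le_one fun s t => ?_
  rw [updateRow_apply]
  split_ifs
  · rw [Pi.single_apply]
    split_ifs <;> simp
  · exact hA s t

end Ultrametric

section Unitriangular

variable {R : Type*} [CommRing R]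

theorem IsUpperTriangular.mul_apply_self {m : Type*} [Fintype m] [LinearOrder m]
    {A B : Matrix m m R} (hA : A.IsUpperTriangular) (hB : B.IsUpperTriangular) (i : m) :
    (A * B) i i = A i i * B i i := by
  rw [mul_apply]
  refine Finset.sum_eq_single i (fun k _ hk => ?_) (by simp)
  rcases hk.lt_or_gt with h | h
  · rw [hA h, zero_mul]
  · rw [hB h, mul_zero]

theorem IsUpperTriangular.inv_apply_self {m : Type*} [Fintype m] [LinearOrder m]
    {V : Matrix m m R} [Invertible V] (hV : V.IsUpperTriangular) (hV1 : ∀ i, V i i = 1)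
    (i : m) : V⁻¹ i i = 1 := by
  have h := congr_fun₂ (mul_inv_of_invertible V) i i
  rwa [hV.mul_apply_self (blockTriangular_inv_of_blockTriangular hV), hV1, one_mul,
    one_apply_eq] at h

theorem IsLowerTriangular.apply_eq_det_submatrix_mul {n : ℕ} {L V : Matrix (Fin n) (Fin n) R}
    (hL : L.IsLowerTriangular) (hL1 : ∀ i, L i i = 1) (hV : V.IsUpperTriangular)
    (hV1 : ∀ i, V i i = 1) (i j : Fin n) :
    L i j = ((L * V).submatrix (Function.update (Fin.castLE j.isLt) (Fin.last j) i)
      (Fin.castLE j.isLt)).det := by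
  set c : Fin (j + 1) → Fin n := Fin.castLE j.isLt
  set r := Function.update c (Fin.last j) i
  have hsub : (L * V).submatrix r c = L.submatrix r c * V.submatrix c c := by
    ext a b
    simp only [submatrix_apply, mul_apply]
    refine (Fintype.sum_of_injective c (Fin.castLE_injective _) _ _ (fun k hk => ?_)
      fun _ => rfl).symm
    refine mul_eq_zero_of_right _ (hV ?_)
    by_contra! hkb
    have hkj : (k : ℕ) < j + 1 := (Fin.le_def.1 hkb).trans_lt b.isLt
    exact hk ⟨⟨k, hkj⟩, Fin.ext rfl⟩
  have hVdet : (V.submatrix c c).det = 1 := by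
    rw [det_of_isUpperTriangular (M := V.submatrix c c) fun a b h => hV h]
    simp [hV1]
  have hLdet : (L.submatrix r c).det = L i j := by
    rw [det_of_isLowerTriangular _ fun a b h => ?_, Fin.prod_univ_castSucc]
    · have hcj : c (Fin.last j) = j := Fin.ext rfl
      simp [r, hcj, Fin.castSucc_ne_last, hL1]
    · have ha : a ≠ Fin.last j := (show a < b from h).trans_le (Fin.le_last b) |>.ne
      simpa [r, ha] using hL h
  rw [hsub, det_mul, hVdet, hLdet, mul_one]

theorem IsLowerTriangular.norm_apply_le_zpow {𝕜 : Type*} [NormedField 𝕜]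
    [IsUltrametricDist 𝕜] {n : ℕ} {L V : Matrix (Fin n) (Fin n) 𝕜}
    (hL : L.IsLowerTriangular) (hL1 : ∀ i, L i i = 1) (hV : V.IsUpperTriangular)
    (hV1 : ∀ i, V i i = 1) {r : ℝ} (hr : 0 < r) {e f : Fin n → ℤ}
    (hM : ∀ s t, ‖(L * V) s t‖ ≤ r ^ e s * r ^ f t) (i j : Fin n) :
    ‖L i j‖ ≤ r ^ (e i - e j + ∑ t : Fin (j + 1), (e + f) (Fin.castLE j.isLt t)) := by
  set c : Fin (j + 1) → Fin n := Fin.castLE j.isLt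
  set rows := Function.update c (Fin.last j) i
  have hcj : c (Fin.last j) = j := Fin.ext rfl
  calc ‖L i j‖ = ‖((L * V).submatrix rows c).det‖ := by
        rw [hL.apply_eq_det_submatrix_mul hL1 hV hV1 i j]
    _ ≤ (∏ a, r ^ e (rows a)) * ∏ b, r ^ f (c b) :=
        norm_det_le_prod_mul_prod _ (fun _ => by positivity) (fun _ => by positivity)
          fun a b => hM _ _
    _ = r ^ (e i - e j + ∑ t, (e + f) (c t)) := by
        rw [Finset.prod_zpow_eq_zpow_sum₀ hr.ne', Finset.prod_zpow_eq_zpow_sum₀ hr.ne',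
          ← zpow_add₀ hr.ne']
        simp only [rows, Fin.sum_univ_castSucc, ne_eq, Fin.castSucc_ne_last, not_false_eq_true,
          Function.update_of_ne, Function.update_self, hcj, Pi.add_apply, Finset.sum_add_distrib]
        congr 1
        ring

end Unitriangular

end Matrix

section GeneralLinear

variable {p : ℕ} [Fact p.Prime] {n : ℕ}

theorem coe_piPow (μ : Fin n → ℤ) :
    (piPow p n μ : Matrix (Fin n) (Fin n) ℚ_[p]) = diagonal fun i => (p : ℚ_[p]) ^ μ i :=
  rfl

theorem coe_piPow_inv (μ : Fin n → ℤ) :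
    (((piPow p n μ)⁻¹ : GL (Fin n) ℚ_[p]) : Matrix (Fin n) (Fin n) ℚ_[p]) =
      diagonal fun i => (p : ℚ_[p]) ^ (-μ i) :=
  rfl

theorem coe_permGL (w : Equiv.Perm (Fin n)) :
    (permGL p n w : Matrix (Fin n) (Fin n) ℚ_[p]) = (w⁻¹).toPEquiv.toMatrix :=
  rfl

theorem mul_mem_Kgp {a b : GL (Fin n) ℚ_[p]} (ha : a ∈ Kgp p n) (hb : b ∈ Kgp p n) :
    a * b ∈ Kgp p n :=
  ⟨norm_mul_apply_le_one ha.1 hb.1, by rw [Units.val_mul, det_mul, norm_mul, ha.2, hb.2, mul_one]⟩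

theorem inv_mem_Kgp {a : GL (Fin n) ℚ_[p]} (ha : a ∈ Kgp p n) : a⁻¹ ∈ Kgp p n := by
  refine ⟨?_, ?_⟩ <;> rw [coe_units_inv]
  · exact norm_inv_apply_le_one ha.1 ha.2
  · rw [det_nonsing_inv, Ring.inverse_eq_inv', norm_inv, ha.2, inv_one]

theorem inv_mem_Uplus {v : GL (Fin n) ℚ_[p]} (hv : v ∈ Uplus p n) : v⁻¹ ∈ Uplus p n := by
  have hV : (v : Matrix (Fin n) (Fin n) ℚ_[p]).IsUpperTriangular := fun i j h => hv.2 i j h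
  refine ⟨?_, ?_⟩ <;> rw [coe_units_inv]
  · exact hV.inv_apply_self hv.1
  · exact fun i j h => blockTriangular_inv_of_blockTriangular hV h

theorem mem_Kgp_of_mem_Uminus {u : GL (Fin n) ℚ_[p]} (hu : u ∈ Uminus p n)
    (h : ∀ i j, j < i → ‖(u : Matrix (Fin n) (Fin n) ℚ_[p]) i j‖ ≤ 1) : u ∈ Kgp p n := by
  refine ⟨fun i j => ?_, ?_⟩
  · rcases lt_trichotomy i j with hij | rfl | hij
    · simp [hu.2 i j hij]
    · simp [hu.1 i]
    · exact h i j hij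
  · rw [det_of_isLowerTriangular _ fun i j h => hu.2 i j h]
    simp [hu.1]

theorem norm_piPow_inv_mul_mul_permGL_mul_piPow_apply_le (lam ν : Fin n → ℤ)
    {k : GL (Fin n) ℚ_[p]} (hk : k ∈ Kgp p n) (w : Equiv.Perm (Fin n)) (s t : Fin n) :
    ‖(((piPow p n lam)⁻¹ * (k * (permGL p n w * piPow p n ν)) : GL (Fin n) ℚ_[p]) :
        Matrix (Fin n) (Fin n) ℚ_[p]) s t‖ ≤ (p : ℝ) ^ lam s * (p : ℝ) ^ (-ν t) := by
  have hentry : (((piPow p n lam)⁻¹ * (k * (permGL p n w * piPow p n ν)) : GL (Fin n) ℚ_[p]) :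
      Matrix (Fin n) (Fin n) ℚ_[p]) s t =
        (p : ℚ_[p]) ^ (-lam s) * k s (w t) * (p : ℚ_[p]) ^ ν t := by
    simp only [Units.val_mul, coe_piPow, coe_piPow_inv, coe_permGL, ← Matrix.mul_assoc,
      mul_diagonal, PEquiv.mul_toMatrix_toPEquiv, submatrix_apply, diagonal_mul, id,
      Equiv.Perm.inv_def, Equiv.symm_symm, mul_assoc]
  rw [hentry, norm_mul, norm_mul, Padic.norm_p_zpow, Padic.norm_p_zpow, neg_neg]
  have hp : (0 : ℝ) < p := by exact_mod_cast (Fact.out : p.Prime).pos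
  gcongr
  exact mul_le_of_le_one_right (by positivity) (hk.1 _ _)

theorem mem_Kgp_of_mul_inv_eq {lam μ : Fin n → ℤ}
    (hlam : ∀ i j : Fin n, j < i → ∑ t, |μ t| ≤ lam j - lam i)
    {u v k : GL (Fin n) ℚ_[p]} (hu : u ∈ Uminus p n) (hv : v ∈ Uplus p n) (hk : k ∈ Kgp p n)
    (w : Equiv.Perm (Fin n))
    (huv : u * v⁻¹ =
      (piPow p n lam)⁻¹ * (k * (permGL p n w * piPow p n fun i => lam i - μ i))) :
    u ∈ Kgp p n := by
  have hp : (1 : ℝ) ≤ p := by exact_mod_cast (Fact.out : p.Prime).one_le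
  have hv' := inv_mem_Uplus hv
  have hM : ∀ s t, ‖((u : Matrix (Fin n) (Fin n) ℚ_[p]) * (v⁻¹ : GL (Fin n) ℚ_[p])) s t‖ ≤
      (p : ℝ) ^ lam s * (p : ℝ) ^ (μ t - lam t) := by
    intro s t
    rw [← Units.val_mul, huv]
    simpa only [neg_sub] using norm_piPow_inv_mul_mul_permGL_mul_piPow_apply_le lam
      (fun i => lam i - μ i) hk w s t
  refine mem_Kgp_of_mem_Uminus hu fun i j hji => ?_
  refine (IsLowerTriangular.norm_apply_le_zpow (fun a b h => hu.2 a b h) hu.1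
    (fun a b h => hv'.2 a b h) hv'.1 (by positivity) hM i j).trans
    (zpow_le_one_of_nonpos₀ hp ?_)
  have hμ : ∑ t : Fin (j + 1), μ (Fin.castLE j.isLt t) ≤ ∑ t, |μ t| := calc
      _ ≤ ∑ t : Fin (j + 1), |μ (Fin.castLE j.isLt t)| :=
        Finset.sum_le_sum fun t _ => le_abs_self _
      _ = ∑ t ∈ Finset.univ.map (Fin.castLEEmb j.isLt), |μ t| := by
        rw [Finset.sum_map]; rfl
      _ ≤ ∑ t, |μ t| := Finset.sum_le_univ_sum_of_nonneg fun t => abs_nonneg _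
  have := hlam i j hji
  simp only [Pi.add_apply, add_sub_cancel]
  linarith

end GeneralLinear

open Pointwise in
theorem iwahori_approximation_general (p : ℕ) [Fact p.Prime] (n : ℕ)
    (w : Equiv.Perm (Fin n)) (μ : Fin n → ℤ) :
    ∃ N : ℕ, ∀ lam : Fin n → ℤ,
      (∀ i j : Fin n, (j : ℕ) = (i : ℕ) + 1 → (N : ℤ) ≤ lam i - lam j) →
      (Iminus p n * {piPow p n lam} * Uminus p n) ∩
          (Iminus p n * {permGL p n w * piPow p n (fun i => lam i - μ i)} * Uplus p n) =
        (Iminus p n * {piPow p n lam} * (Uminus p n ∩ Kgp p n)) ∩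
          (Iminus p n * {permGL p n w * piPow p n (fun i => lam i - μ i)} * Uplus p n) := by
  refine ⟨(∑ t, |μ t|).toNat, fun lam hlam => ?_⟩
  have hgap : ∀ i j : Fin n, j < i → ∑ t, |μ t| ≤ lam j - lam i := fun _ _ hji =>
    (Int.self_le_toNat _).trans (le_sub_of_lt_of_forall_succ (Int.natCast_nonneg _) hlam hji)
  refine Set.Subset.antisymm (fun x ⟨hx, hx'⟩ => ⟨?_, hx'⟩)
    (Set.inter_subset_inter_left _ (Set.mul_subset_mul_left Set.inter_subset_left))
  obtain ⟨_, ⟨a, ha, _, rfl, rfl⟩, u, hu, rfl⟩ := hx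
  obtain ⟨_, ⟨b, hb, _, rfl, rfl⟩, v, hv, hx⟩ := hx'
  beta_reduce at hx
  have huv : u * v⁻¹ = (piPow p n lam)⁻¹ *
      (a⁻¹ * b * (permGL p n w * piPow p n fun i => lam i - μ i)) := calc
    u * v⁻¹ = (piPow p n lam)⁻¹ * a⁻¹ * (a * piPow p n lam * u) * v⁻¹ := by group
    _ = _ := by rw [← hx]; group
  have huK := mem_Kgp_of_mul_inv_eq hgap hu hv (mul_mem_Kgp (inv_mem_Kgp ha.1) hb.1) w huv
  exact Set.mul_mem_mul (Set.mul_mem_mul ha rfl) ⟨hu, huK⟩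

open Pointwise in
/-- **Iwahori Approximation** (Proposition 4.2, type `A_{n−1}` instance): for fixed `w, μ`
and all sufficiently regular dominant `λ`,
`I⁻·π^{λ}·U⁻ ∩ I⁻·w·π^{λ−μ}·U⁺ = I⁻·π^{λ}·U⁻_O ∩ I⁻·w·π^{λ−μ}·U⁺`. -/
theorem iwahori_approximation (p : ℕ) [Fact p.Prime] (n : ℕ) (hn : 2 ≤ n)
    (w : Equiv.Perm (Fin n)) (μ : Fin n → ℤ) :
    ∃ N : ℕ, ∀ lam : Fin n → ℤ,
      (∀ i j : Fin n, (j : ℕ) = (i : ℕ) + 1 → (N : ℤ) ≤ lam i - lam j) →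
      (Iminus p n * {piPow p n lam} * Uminus p n) ∩
          (Iminus p n * {permGL p n w * piPow p n (fun i => lam i - μ i)} * Uplus p n) =
        (Iminus p n * {piPow p n lam} * (Uminus p n ∩ Kgp p n)) ∩
          (Iminus p n * {permGL p n w * piPow p n (fun i => lam i - μ i)} * Uplus p n) :=
  iwahori_approximation_general p n w μ
end

section
/- (Iwahori level decomposition, Lemma 5.2, type A_{n−1} instance.) Let λ ∈ ℤⁿ be regular dominant (λ_1 > ⋯ > λ_n) and let μ ∈ ℤⁿ. Then there is a bijection between the set of left K-cosets K\(K·π^{μ}·U⁺ ∩ K·π^{λ}·K) and the disjoint union over w ∈ S_n of the sets of left I⁻-cosets I⁻\(I⁻·w⁻¹·π^{μ}·U⁺ ∩ I⁻·π^{λ}·K). -/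
open Matrix Pointwise

/-!
The map is `I⁻g ↦ Kg`. It is onto because of the Bruhat-type decomposition
`K = ⋃_w I⁻ w U⁺`, obtained by reducing the columns of an element of `K` modulo `p`: if
`g = k π^μ u = k₁ π^λ k₂`, write `k₁⁻¹ k = i w⁻¹ u₀`; then `k₁⁻¹ g` lies in
`I⁻ w⁻¹ π^μ U⁺ ∩ π^λ K`. It is one-to-one because, `λ` being regular dominant, an element `c ∈ K`
with `π^λ c π^{-λ} ∈ K` has `π^λ c π^{-λ} ∈ I⁻`, so `K`-equivalent points of `I⁻ π^λ K` are
`I⁻`-equivalent; and `w` is then recovered since the diagonal of an element of `I⁻` consists of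
units, whereas `v⁻¹ U⁺ w` has a zero on the diagonal unless `v = w`.
-/

namespace Subgroup

variable {G : Type*} [Group G]

theorem coe_mul_singleton (K : Subgroup G) (g : G) :
    (K : Set G) * {g} = MulOpposite.op g • (K : Set G) := by
  rw [Set.mul_singleton]; rfl

theorem mul_singleton_eq_mul_singleton_iff {K : Subgroup G} {g g' : G} :
    (K : Set G) * {g'} = K * {g} ↔ g * g'⁻¹ ∈ K := by
  rw [K.coe_mul_singleton, K.coe_mul_singleton, rightCoset_eq_iff]

theorem coe_mul_coe_of_le {K I : Subgroup G} (h : I ≤ K) : (K : Set G) * I = K :=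
  ((Set.mul_subset_mul_left h).trans K.toSubmonoid.coe_mul_self_eq.le).antisymm
    (Set.subset_mul_left _ I.one_mem)

theorem nonempty_equiv_sigma_cosets {ι : Type*} {K I : Subgroup G} (hIK : I ≤ K)
    {X : Set G} {Y : ι → Set G} (hYX : ∀ w, Y w ⊆ X)
    (hX : ∀ g ∈ X, ∃ w, ∃ g' ∈ Y w, g * g'⁻¹ ∈ K)
    (hY : ∀ v w, ∀ g ∈ Y v, ∀ g' ∈ Y w, g * g'⁻¹ ∈ K → g * g'⁻¹ ∈ I ∧ v = w) :
    Nonempty ({C : Set G // ∃ g ∈ X, C = (K : Set G) * {g}} ≃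
      (w : ι) × {C : Set G // ∃ g ∈ Y w, C = (I : Set G) * {g}}) := by
  have hKI (g : G) : (K : Set G) * ((I : Set G) * {g}) = K * {g} := by
    rw [← mul_assoc, coe_mul_coe_of_le hIK]
  let F : ((w : ι) × {C : Set G // ∃ g ∈ Y w, C = (I : Set G) * {g}}) →
      {C : Set G // ∃ g ∈ X, C = (K : Set G) * {g}} := fun C =>
    ⟨K * C.2.1, by
      obtain ⟨g, hg, hC⟩ := C.2.2
      exact ⟨g, hYX _ hg, by rw [hC, hKI]⟩⟩
  refine ⟨(Equiv.ofBijective F ⟨?_, ?_⟩).symm⟩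
  · rintro ⟨v, C, g, hg, rfl⟩ ⟨w, C', g', hg', rfl⟩ hF
    have hK : g * g'⁻¹ ∈ K := by
      have := congrArg Subtype.val hF
      simp only [F, hKI] at this
      exact mul_singleton_eq_mul_singleton_iff.mp this.symm
    obtain ⟨hI, rfl⟩ := hY v w g hg g' hg' hK
    exact congrArg (Sigma.mk v) (Subtype.ext (mul_singleton_eq_mul_singleton_iff.mpr hI).symm)
  · rintro ⟨C, g, hg, rfl⟩
    obtain ⟨w, g', hg', hK⟩ := hX g hg
    exact ⟨⟨w, _, g', hg', rfl⟩, Subtype.ext <| by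
      simp only [F, hKI]; exact mul_singleton_eq_mul_singleton_iff.mpr hK⟩

end Subgroup

theorem Set.mem_mul_singleton_mul {M : Type*} [Mul M] {s t : Set M} {a x : M} :
    x ∈ s * {a} * t ↔ ∃ y ∈ s, ∃ z ∈ t, y * a * z = x := by
  simp [Set.mem_mul]

theorem Equiv.Perm.eq_of_forall_le {n : ℕ} {σ τ : Equiv.Perm (Fin n)} (h : ∀ i, σ i ≤ τ i) :
    σ = τ := by
  have hsum : ∑ i, (σ i : ℕ) = ∑ i, (τ i : ℕ) := by
    rw [Equiv.sum_comp σ (fun i => (i : ℕ)), Equiv.sum_comp τ (fun i => (i : ℕ))]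
  ext i
  exact (Finset.sum_eq_sum_iff_of_le fun i _ => Fin.le_iff_val_le_val.mp (h i)).mp hsum i
    (Finset.mem_univ i)

theorem Equiv.Perm.exists_lt_of_ne_one {n : ℕ} {σ : Equiv.Perm (Fin n)} (hσ : σ ≠ 1) :
    ∃ i, σ i < i := by
  by_contra! h
  exact hσ (eq_of_forall_le h).symm

theorem norm_prod_le_of_le_one {𝕜 ι : Type*} [NormedField 𝕜] [Fintype ι] [DecidableEq ι]
    {f : ι → 𝕜} (h1 : ∀ i, ‖f i‖ ≤ 1) (i₀ : ι) {r : ℝ} (h : ‖f i₀‖ ≤ r) : ‖∏ i, f i‖ ≤ r := by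
  rw [norm_prod, ← Finset.mul_prod_erase _ _ (Finset.mem_univ i₀)]
  exact (mul_le_of_le_one_right (norm_nonneg _)
    (Finset.prod_le_one (fun _ _ => norm_nonneg _) fun i _ => h1 i)).trans h

namespace Matrix

variable {𝕜 : Type*} [NormedField 𝕜] [IsUltrametricDist 𝕜] {n : ℕ}
  {A : Matrix (Fin n) (Fin n) 𝕜} {r : ℝ}

theorem norm_det_le (hr : 0 ≤ r) (h : ∀ σ : Equiv.Perm (Fin n), ‖∏ i, A (σ i) i‖ ≤ r) :
    ‖A.det‖ ≤ r := by
  rw [det_apply]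
  exact IsUltrametricDist.norm_sum_le_of_forall_le_of_nonneg hr fun σ _ =>
    (norm_units_zsmul _ _).trans_le (h σ)

theorem norm_det_le_of_norm_col_le (h1 : ∀ i j, ‖A i j‖ ≤ 1) (c : Fin n)
    (hc : ∀ i, ‖A i c‖ ≤ r) : ‖A.det‖ ≤ r :=
  norm_det_le ((norm_nonneg _).trans (hc c)) fun _ =>
    norm_prod_le_of_le_one (fun _ => h1 _ _) c (hc _)

theorem norm_det_sub_prod_diag_le (hr : 0 ≤ r) (h1 : ∀ i j, ‖A i j‖ ≤ 1)
    (hup : ∀ i j, i < j → ‖A i j‖ ≤ r) : ‖A.det - ∏ i, A i i‖ ≤ r := by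
  rw [det_apply, ← Finset.add_sum_erase _ _ (Finset.mem_univ 1)]
  simp only [Equiv.Perm.sign_one, one_smul, Equiv.Perm.one_apply, add_sub_cancel_left]
  refine IsUltrametricDist.norm_sum_le_of_forall_le_of_nonneg hr fun σ hσ => ?_
  obtain ⟨i, hi⟩ := Equiv.Perm.exists_lt_of_ne_one (Finset.ne_of_mem_erase hσ)
  exact (norm_units_zsmul _ _).trans_le
    (norm_prod_le_of_le_one (fun j => h1 (σ j) j) i (hup _ _ hi))

theorem norm_apply_self_eq_one (hr : r < 1) (h1 : ∀ i j, ‖A i j‖ ≤ 1)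
    (hup : ∀ i j, i < j → ‖A i j‖ ≤ r) (hdet : ‖A.det‖ = 1) (i : Fin n) : ‖A i i‖ = 1 := by
  have hD : ‖∏ i, A i i‖ = 1 := by
    have hlt := (norm_det_sub_prod_diag_le (le_max_right r 0) h1
      fun i j hij => (hup i j hij).trans (le_max_left r 0)).trans_lt (max_lt hr one_pos)
    rw [← sub_sub_cancel A.det (∏ i, A i i), sub_eq_add_neg,
      IsUltrametricDist.norm_add_eq_max_of_norm_ne_norm (by rw [norm_neg]; linarith), hdet,
      norm_neg, max_eq_left hlt.le]
  exact le_antisymm (h1 i i) (hD ▸ norm_prod_le_of_le_one (fun j => h1 j j) i le_rfl)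

end Matrix

theorem Matrix.IsUpperTriangular.mul_apply_self_s7 {m R : Type*} [Fintype m] [LinearOrder m]
    [NonUnitalNonAssocSemiring R] {A B : Matrix m m R} (hA : A.IsUpperTriangular)
    (hB : B.IsUpperTriangular) (i : m) : (A * B) i i = A i i * B i i := by
  rw [mul_apply, Finset.sum_eq_single i]
  · intro c _ hc
    rcases hc.lt_or_gt with h | h
    · rw [hA h, zero_mul]
    · rw [hB h, mul_zero]
  · simp

theorem Matrix.mul_one_add_vecMulVec_single_apply {m R : Type*} [Fintype m] [DecidableEq m]
    [Semiring R] (N : Matrix m m R) (c : m) (β : m → R) (a j : m) :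
    (N * (1 + vecMulVec (Pi.single c 1) β)) a j = N a j + N a c * β j := by
  rw [Matrix.mul_add, Matrix.mul_one, mul_vecMulVec, mulVec_single_one, add_apply,
    vecMulVec_apply, col_apply]

theorem Padic.norm_le_inv_of_norm_lt_one {p : ℕ} [Fact p.Prime] {x : ℚ_[p]} (h : ‖x‖ < 1) :
    ‖x‖ ≤ (p : ℝ)⁻¹ := by
  simpa using (Padic.norm_le_pow_iff_norm_lt_pow_add_one x (-1)).2 (by simpa using h)

section GLn

variable {p : ℕ} [Fact p.Prime] {n : ℕ}

theorem Kgp_eq_range :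
    Kgp p n =
      Set.range (GeneralLinearGroup.map (n := Fin n) (PadicInt.Coe.ringHom (p := p))) := by
  ext g
  constructor
  · rintro ⟨hint, hdet⟩
    let M : Matrix (Fin n) (Fin n) ℤ_[p] := of fun i j => ⟨g i j, hint i j⟩
    have hM : M.map PadicInt.Coe.ringHom = g := rfl
    have hMdet : IsUnit M.det := by
      rw [PadicInt.isUnit_iff, PadicInt.norm_def]
      refine (congrArg norm ?_).trans hdet
      rw [← hM]
      exact RingHom.map_det PadicInt.Coe.ringHom M
    exact ⟨((isUnit_iff_isUnit_det M).mpr hMdet).unit, Units.ext hM⟩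
  · rintro ⟨h, rfl⟩
    refine ⟨fun i j => PadicInt.norm_le_one (h i j), ?_⟩
    change ‖(PadicInt.Coe.ringHom.mapMatrix (h : Matrix (Fin n) (Fin n) ℤ_[p])).det‖ = 1
    rw [← RingHom.map_det]
    exact PadicInt.isUnit_iff.mp (isUnits_det_units h)

noncomputable def Kgp.subgroup (p : ℕ) [Fact p.Prime] (n : ℕ) :
    Subgroup (GL (Fin n) ℚ_[p]) :=
  (GeneralLinearGroup.map PadicInt.Coe.ringHom).range.copy (Kgp p n) Kgp_eq_range

theorem piPow_inv (μ : Fin n → ℤ) : (piPow p n μ)⁻¹ = piPow p n (-μ) := Units.ext rfl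

theorem piPow_conj_apply (μ : Fin n → ℤ) (g : GL (Fin n) ℚ_[p]) (a b : Fin n) :
    (piPow p n μ * g * (piPow p n μ)⁻¹ : GL (Fin n) ℚ_[p]) a b =
      (p : ℚ_[p]) ^ μ a * g a b * (p : ℚ_[p]) ^ (-μ b) := by
  change (diagonal (fun i => (p : ℚ_[p]) ^ μ i) * (g : Matrix (Fin n) (Fin n) ℚ_[p]) *
    diagonal (fun i => (p : ℚ_[p]) ^ (-μ i))) a b = _
  rw [mul_diagonal, diagonal_mul]

theorem norm_piPow_conj_apply (μ : Fin n → ℤ) (g : GL (Fin n) ℚ_[p]) (a b : Fin n) :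
    ‖(piPow p n μ * g * (piPow p n μ)⁻¹ : GL (Fin n) ℚ_[p]) a b‖ =
      (p : ℝ) ^ (μ b - μ a) * ‖(g : Matrix (Fin n) (Fin n) ℚ_[p]) a b‖ := by
  have hp : (p : ℝ) ≠ 0 := Nat.cast_ne_zero.mpr (Fact.out : p.Prime).ne_zero
  rw [piPow_conj_apply, norm_mul, norm_mul, Padic.norm_p_zpow, Padic.norm_p_zpow, neg_neg,
    mul_comm, ← mul_assoc, ← zpow_add₀ hp, ← sub_eq_add_neg]

theorem piPow_conj_mem_Kgp_iff (μ : Fin n → ℤ) {g : GL (Fin n) ℚ_[p]} (hg : g ∈ Kgp p n) :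
    piPow p n μ * g * (piPow p n μ)⁻¹ ∈ Kgp p n ↔
      ∀ a b, (p : ℝ) ^ (μ b - μ a) * ‖(g : Matrix (Fin n) (Fin n) ℚ_[p]) a b‖ ≤ 1 := by
  simp only [Kgp, Set.mem_ofPred_eq, ← norm_piPow_conj_apply, Units.val_mul]
  rw [det_units_conj]
  exact and_iff_left hg.2

/-- The fundamental coweight `e_1 + ⋯ + e_{i+1}` (0-indexed `i`). -/
def fundamentalCoweight (i : Fin n) : Fin n → ℤ := fun a => if a ≤ i then 1 else 0

theorem mem_Iminus_iff {g : GL (Fin n) ℚ_[p]} :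
    g ∈ Iminus p n ↔ g ∈ Kgp p n ∧
      ∀ i, piPow p n (-fundamentalCoweight i) * g * (piPow p n (-fundamentalCoweight i))⁻¹ ∈
        Kgp p n := by
  refine and_congr_right fun hg => ?_
  have hp : (0 : ℝ) < p := by exact_mod_cast (Fact.out : p.Prime).pos
  have hp1 : (1 : ℝ) ≤ p := by exact_mod_cast (Fact.out : p.Prime).one_lt.le
  simp only [piPow_conj_mem_Kgp_iff _ hg, Pi.neg_apply, neg_sub_neg, fundamentalCoweight]
  constructor
  · intro h i a b
    by_cases hab : a ≤ i ∧ ¬b ≤ i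
    · rw [if_pos hab.1, if_neg hab.2, sub_zero, zpow_one, ← le_inv_mul_iff₀ hp, mul_one]
      exact h a b (hab.1.trans_lt (not_le.mp hab.2))
    · refine mul_le_one₀ (zpow_le_one_of_nonpos₀ hp1 ?_) (norm_nonneg _) (hg.1 a b)
      split_ifs <;> simp_all
  · intro h a b hab
    have := h a a b
    rwa [if_pos le_rfl, if_neg hab.not_ge, sub_zero, zpow_one, ← le_inv_mul_iff₀ hp,
      mul_one] at this

noncomputable def Iminus.subgroup (p : ℕ) [Fact p.Prime] (n : ℕ) :
    Subgroup (GL (Fin n) ℚ_[p]) :=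
  (Kgp.subgroup p n ⊓ ⨅ i, (Kgp.subgroup p n).comap
      (MulAut.conj (piPow p n (-fundamentalCoweight i))).toMonoidHom).copy (Iminus p n) <| by
    ext g
    simp only [SetLike.mem_coe, Subgroup.mem_inf, Subgroup.mem_iInf]
    exact mem_Iminus_iff (p := p)

theorem Iminus.subgroup_le : Iminus.subgroup p n ≤ Kgp.subgroup p n := fun _ hg => hg.1

theorem mem_Uplus_iff {g : GL (Fin n) ℚ_[p]} :
    g ∈ Uplus p n ↔ (g : Matrix (Fin n) (Fin n) ℚ_[p]).IsUpperTriangular ∧ ∀ i, g i i = 1 :=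
  and_comm

noncomputable def Uplus.subgroup (p : ℕ) [Fact p.Prime] (n : ℕ) :
    Subgroup (GL (Fin n) ℚ_[p]) where
  carrier := Uplus p n
  one_mem' := mem_Uplus_iff.mpr ⟨blockTriangular_one, fun _ => one_apply_eq _⟩
  mul_mem' {g h} hg hh := by
    rw [mem_Uplus_iff] at *
    refine ⟨hg.1.mul hh.1, fun i => ?_⟩
    rw [Units.val_mul, hg.1.mul_apply_self_s7 hh.1, hg.2, hh.2, one_mul]
  inv_mem' {g} hg := by
    rw [mem_Uplus_iff] at *
    have hinv :
        ((g⁻¹ : GL (Fin n) ℚ_[p]) : Matrix (Fin n) (Fin n) ℚ_[p]).IsUpperTriangular := by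
      rw [coe_units_inv]; exact blockTriangular_inv_of_blockTriangular hg.1
    refine ⟨hinv, fun i => ?_⟩
    have := hinv.mul_apply_self_s7 hg.1 i
    rwa [← Units.val_mul, inv_mul_cancel, Units.val_one, one_apply_eq, hg.2, mul_one,
      eq_comm] at this

theorem permGL_mul_apply (w : Equiv.Perm (Fin n)) (g : GL (Fin n) ℚ_[p]) (i j : Fin n) :
    (permGL p n w * g : GL (Fin n) ℚ_[p]) i j = g (w⁻¹ i) j := by
  change ((w⁻¹).toPEquiv.toMatrix * (g : Matrix (Fin n) (Fin n) ℚ_[p]) :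
    Matrix (Fin n) (Fin n) ℚ_[p]) i j = _
  rw [PEquiv.toMatrix_toPEquiv_mul]; rfl

theorem mul_permGL_apply (w : Equiv.Perm (Fin n)) (g : GL (Fin n) ℚ_[p]) (i j : Fin n) :
    (g * permGL p n w : GL (Fin n) ℚ_[p]) i j = g i (w j) := by
  change ((g : Matrix (Fin n) (Fin n) ℚ_[p]) * (w⁻¹).toPEquiv.toMatrix :
    Matrix (Fin n) (Fin n) ℚ_[p]) i j = _
  rw [PEquiv.mul_toMatrix_toPEquiv]; rfl

theorem permGL_inv (w : Equiv.Perm (Fin n)) : (permGL p n w)⁻¹ = permGL p n w⁻¹ :=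
  Units.ext <| by change w.permMatrix ℚ_[p] = (w⁻¹⁻¹).permMatrix ℚ_[p]; rw [inv_inv]

theorem permGL_mem_Kgp (w : Equiv.Perm (Fin n)) : permGL p n w ∈ Kgp p n := by
  refine ⟨fun i j => ?_, ?_⟩
  · change ‖(w⁻¹).permMatrix ℚ_[p] i j‖ ≤ 1
    simp only [Equiv.Perm.permMatrix, PEquiv.toMatrix_apply]
    split_ifs <;> simp
  · change ‖((w⁻¹).permMatrix ℚ_[p]).det‖ = 1
    rcases Int.units_eq_one_or (Equiv.Perm.sign w⁻¹) with h | h <;> simp [det_permutation, h]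

theorem piPow_conj_mem_Uplus (μ : Fin n → ℤ) {u : GL (Fin n) ℚ_[p]} (hu : u ∈ Uplus p n) :
    piPow p n μ * u * (piPow p n μ)⁻¹ ∈ Uplus p n := by
  have hp : (p : ℚ_[p]) ≠ 0 := Nat.cast_ne_zero.mpr (Fact.out : p.Prime).ne_zero
  refine ⟨fun i => ?_, fun i j hij => ?_⟩
  · rw [piPow_conj_apply, hu.1, mul_one, ← zpow_add₀ hp, add_neg_cancel, zpow_zero]
  · rw [piPow_conj_apply, hu.2 i j hij, mul_zero, zero_mul]

theorem Iminus.norm_apply_self {g : GL (Fin n) ℚ_[p]} (hg : g ∈ Iminus p n) (i : Fin n) :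
    ‖(g : Matrix (Fin n) (Fin n) ℚ_[p]) i i‖ = 1 :=
  norm_apply_self_eq_one (inv_lt_one_of_one_lt₀ (by exact_mod_cast (Fact.out : p.Prime).one_lt))
    hg.1.1 hg.2 hg.1.2 i

theorem eq_of_permGL_mul_mul_permGL_mem_Iminus {v w : Equiv.Perm (Fin n)}
    {u : GL (Fin n) ℚ_[p]} (hu : u ∈ Uplus p n)
    (h : permGL p n v⁻¹ * u * permGL p n w ∈ Iminus p n) : v = w := by
  refine Equiv.Perm.eq_of_forall_le fun a => not_lt.mp fun hlt => ?_
  have := Iminus.norm_apply_self h a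
  rw [mul_permGL_apply, permGL_mul_apply, inv_inv, hu.2 _ _ hlt, norm_zero] at this
  exact zero_ne_one this

theorem piPow_conj_mem_Iminus {lam : Fin n → ℤ} (hlam : StrictAnti lam)
    {c : GL (Fin n) ℚ_[p]} (hc : c ∈ Kgp p n)
    (hcK : piPow p n lam * c * (piPow p n lam)⁻¹ ∈ Kgp p n) :
    piPow p n lam * c * (piPow p n lam)⁻¹ ∈ Iminus p n := by
  refine ⟨hcK, fun a b hab => ?_⟩
  have hp : (1 : ℝ) < p := by exact_mod_cast (Fact.out : p.Prime).one_lt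
  rw [norm_piPow_conj_apply, ← _root_.zpow_neg_one]
  exact mul_le_of_le_one_right (zpow_pos (by linarith) _).le (hc.1 a b) |>.trans
    (zpow_le_zpow_right₀ hp.le (by have := hlam hab; omega))

theorem exists_mem_Uplus_coe_eq {M : Matrix (Fin n) (Fin n) ℚ_[p]} (hM : M.IsUpperTriangular)
    (hdiag : ∀ i, M i i = 1) (hint : ∀ i j, ‖M i j‖ ≤ 1) :
    ∃ u ∈ Uplus p n, u ∈ Kgp p n ∧ (u : Matrix (Fin n) (Fin n) ℚ_[p]) = M := by
  have hdet : M.det = 1 := by rw [det_of_isUpperTriangular hM]; simp [hdiag]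
  refine ⟨GeneralLinearGroup.mkOfDetNeZero M (by simp [hdet]), mem_Uplus_iff.mpr ⟨hM, hdiag⟩,
    ⟨hint, ?_⟩, rfl⟩
  change ‖M.det‖ = 1
  rw [hdet, norm_one]

theorem exists_norm_eq_one_of_mem_Kgp {N : GL (Fin n) ℚ_[p]} (hN : N ∈ Kgp p n) (c : Fin n) :
    ∃ a, ‖(N : Matrix (Fin n) (Fin n) ℚ_[p]) a c‖ = 1 := by
  obtain ⟨a, -, ha⟩ := Finset.exists_max_image Finset.univ
    (fun a => ‖(N : Matrix (Fin n) (Fin n) ℚ_[p]) a c‖) ⟨c, Finset.mem_univ _⟩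
  refine ⟨a, le_antisymm (hN.1 a c) ?_⟩
  rw [← hN.2]
  exact norm_det_le_of_norm_col_le hN.1 c fun i => ha i (Finset.mem_univ _)

theorem exists_mem_Uplus_mul_apply_eq (c : Fin n) {β : Fin n → ℚ_[p]}
    (hβ : ∀ j, ¬c < j → β j = 0) (hβ1 : ∀ j, ‖β j‖ ≤ 1) :
    ∃ u ∈ Uplus p n, u ∈ Kgp p n ∧
      ∀ (N : GL (Fin n) ℚ_[p]) a j, (N * u : GL (Fin n) ℚ_[p]) a j = N a j + N a c * β j := by
  have hM (i j : Fin n) : (1 + vecMulVec (Pi.single c 1) β) i j =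
      (1 : Matrix (Fin n) (Fin n) ℚ_[p]) i j + if i = c then β j else 0 := by
    simp [vecMulVec_apply, Pi.single_apply]
  have hMup : (1 + vecMulVec (Pi.single c 1) β).IsUpperTriangular := fun i j (hji : j < i) => by
    rw [hM, one_apply_ne hji.ne', zero_add]
    split_ifs with hi
    · exact hβ j (hi ▸ hji).not_gt
    · rfl
  have hMdiag (i : Fin n) : (1 + vecMulVec (Pi.single c 1) β) i i = 1 := by
    rw [hM, one_apply_eq]
    split_ifs with hi
    · rw [hi, hβ c (lt_irrefl _), add_zero]
    · rw [add_zero]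
  have hMint (i j : Fin n) : ‖(1 + vecMulVec (Pi.single c 1) β) i j‖ ≤ 1 := by
    rw [hM]
    refine (IsUltrametricDist.norm_add_le_max _ _).trans (max_le ?_ ?_)
    · rw [one_apply]; split_ifs <;> simp
    · split_ifs
      · exact hβ1 j
      · simp
  obtain ⟨u, hu, huK, hu_eq⟩ := exists_mem_Uplus_coe_eq hMup hMdiag hMint
  refine ⟨u, hu, huK, fun N a j => ?_⟩
  rw [Units.val_mul, hu_eq, mul_one_add_vecMulVec_single_apply]

/-- The first `m` columns of `N` are in column echelon form modulo `p`, with pivot rows `f`. -/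
def IsColumnReduced (m : ℕ) (N : GL (Fin n) ℚ_[p]) (f : Fin n → Fin n) : Prop :=
  ∀ j : Fin n, (j : ℕ) < m →
    ‖N (f j) j‖ = 1 ∧ (∀ a < f j, ‖N a j‖ < 1) ∧ ∀ j', j < j' → N (f j) j' = 0

theorem IsColumnReduced.exists_succ {m : ℕ} (hm : m < n) {N : GL (Fin n) ℚ_[p]}
    (hN : N ∈ Kgp p n) {f : Fin n → Fin n} (h : IsColumnReduced m N f) :
    ∃ u ∈ Uplus p n, u ∈ Kgp p n ∧
      ∃ f', IsColumnReduced (m + 1) (N * u : GL (Fin n) ℚ_[p]) f' := by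
  set c : Fin n := ⟨m, hm⟩
  obtain ⟨r, hr, hrmin⟩ : ∃ r, ‖N r c‖ = 1 ∧ ∀ a < r, ‖N a c‖ < 1 := by
    obtain ⟨a, ha⟩ := exists_norm_eq_one_of_mem_Kgp hN c
    obtain ⟨r, hr, hmin⟩ := wellFounded_lt.has_min {a | ‖N a c‖ = 1} ⟨a, ha⟩
    exact ⟨r, hr, fun a har => (hN.1 a c).lt_of_ne fun ha => hmin a ha har⟩
  have hrc : N r c ≠ 0 := norm_ne_zero_iff.mp (hr ▸ one_ne_zero)
  -- Adding `β j` times column `c` to each later column `j` clears the pivot row `r`.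
  set β : Fin n → ℚ_[p] := fun j => if c < j then -(N r j / N r c) else 0
  have hβ : ∀ j, ¬c < j → β j = 0 := fun j hj => if_neg hj
  obtain ⟨u, hu, huK, hNu⟩ := exists_mem_Uplus_mul_apply_eq (p := p) c hβ fun j => by
    simp only [β]
    split_ifs
    · rw [norm_neg, norm_div, hr, div_one]; exact hN.1 r j
    · simp
  have hcol (a j : Fin n) (hj : ¬c < j) : (N * u : GL (Fin n) ℚ_[p]) a j = N a j := by
    rw [hNu N, hβ j hj, mul_zero, add_zero]
  refine ⟨u, hu, huK, Function.update f c r, fun j hj => ?_⟩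
  rcases (Nat.lt_succ_iff.mp hj).lt_or_eq with hjm | hjm
  · have hjc : j < c := hjm
    obtain ⟨h1, h2, h3⟩ := h j hjm
    rw [Function.update_of_ne hjc.ne, hcol _ _ hjc.not_gt]
    refine ⟨h1, fun a ha => hcol a j hjc.not_gt ▸ h2 a ha, fun j' hj' => ?_⟩
    rw [hNu N, h3 j' hj', h3 c hjc, zero_mul, add_zero]
  · obtain rfl : j = c := Fin.ext hjm
    rw [Function.update_self, hcol _ _ (lt_irrefl _)]
    refine ⟨hr, fun a ha => hcol a c (lt_irrefl _) ▸ hrmin a ha, fun j' hj' => ?_⟩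
    rw [hNu N]
    simp only [β, if_pos hj']
    field_simp
    ring

theorem exists_mul_mem_Uplus_isColumnReduced {k : GL (Fin n) ℚ_[p]} (hk : k ∈ Kgp p n) {m : ℕ}
    (hm : m ≤ n) : ∃ u ∈ Uplus p n, k * u ∈ Kgp p n ∧ ∃ f, IsColumnReduced m (k * u) f := by
  induction m with
  | zero =>
    exact ⟨1, (Uplus.subgroup p n).one_mem, by rwa [mul_one], id,
      fun _ hj => (Nat.not_lt_zero _ hj).elim⟩
  | succ m ih =>
    obtain ⟨u, hu, hku, f, hf⟩ := ih (Nat.le_of_succ_le hm)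
    obtain ⟨u', hu', hu'K, f', hf'⟩ := hf.exists_succ hm hku
    refine ⟨u * u', (Uplus.subgroup p n).mul_mem hu hu', ?_, f', by rwa [← mul_assoc]⟩
    rw [← mul_assoc]
    exact (Kgp.subgroup p n).mul_mem hku hu'K

theorem exists_eq_Iminus_mul_permGL_mul_Uplus {k : GL (Fin n) ℚ_[p]} (hk : k ∈ Kgp p n) :
    ∃ i ∈ Iminus p n, ∃ σ : Equiv.Perm (Fin n), ∃ u ∈ Uplus p n, k = i * permGL p n σ * u := by
  obtain ⟨u, hu, hN, f, hf⟩ := exists_mul_mem_Uplus_isColumnReduced hk le_rfl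
  have hinj : f.Injective := by
    intro j j' hjj'
    by_contra hne
    wlog hlt : j < j' generalizing j j'
    · exact this hjj'.symm (Ne.symm hne) ((not_lt.mp hlt).lt_of_ne (Ne.symm hne))
    have := (hf j' j'.2).1
    rw [← hjj', (hf j j.2).2.2 j' hlt, norm_zero] at this
    exact zero_ne_one this
  let φ := Equiv.ofBijective f hinj.bijective_of_finite
  refine ⟨k * u * permGL p n φ⁻¹,
    ⟨(Kgp.subgroup p n).mul_mem hN (permGL_mem_Kgp _), fun a b hab => ?_⟩, φ, u⁻¹,
    (Uplus.subgroup p n).inv_mem hu, ?_⟩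
  · rw [mul_permGL_apply]
    refine Padic.norm_le_inv_of_norm_lt_one ((hf (φ⁻¹ b) (φ⁻¹ b).2).2.1 a ?_)
    exact hab.trans_eq (φ.apply_symm_apply b).symm
  · rw [← permGL_inv, inv_mul_cancel_right, mul_inv_cancel_right]

theorem strictAnti_of_forall_succ_lt {lam : Fin n → ℤ}
    (hreg : ∀ i j : Fin n, (j : ℕ) = (i : ℕ) + 1 → lam j < lam i) : StrictAnti lam := by
  cases n with
  | zero => exact fun a => a.elim0
  | succ n => exact Fin.strictAnti_iff_succ_lt.mpr fun i => hreg _ _ (by simp)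

theorem mul_inv_mem_Iminus_of_mem_Iminus_piPow_Kgp {lam : Fin n → ℤ} (hlam : StrictAnti lam)
    {g g' : GL (Fin n) ℚ_[p]} (hg : g ∈ Iminus p n * {piPow p n lam} * Kgp p n)
    (hg' : g' ∈ Iminus p n * {piPow p n lam} * Kgp p n) (hK : g * g'⁻¹ ∈ Kgp p n) :
    g * g'⁻¹ ∈ Iminus p n := by
  obtain ⟨i, hi, c, hc, rfl⟩ := Set.mem_mul_singleton_mul.mp hg
  obtain ⟨i', hi', c', hc', rfl⟩ := Set.mem_mul_singleton_mul.mp hg'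
  have key : i * piPow p n lam * c * (i' * piPow p n lam * c')⁻¹ =
      i * (piPow p n lam * (c * c'⁻¹) * (piPow p n lam)⁻¹) * i'⁻¹ := by group
  have hcc' : c * c'⁻¹ ∈ Kgp p n := (Kgp.subgroup p n).mul_mem hc ((Kgp.subgroup p n).inv_mem hc')
  rw [key] at hK ⊢
  refine (Iminus.subgroup p n).mul_mem ((Iminus.subgroup p n).mul_mem hi
    (piPow_conj_mem_Iminus hlam hcc' ?_)) ((Iminus.subgroup p n).inv_mem hi')
  exact ((Kgp.subgroup p n).mul_mem_cancel_left hi.1).mp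
    (((Kgp.subgroup p n).mul_mem_cancel_right ((Kgp.subgroup p n).inv_mem hi'.1)).mp hK)

theorem eq_of_mem_Iminus_permGL_piPow_Uplus {μ : Fin n → ℤ} {v w : Equiv.Perm (Fin n)}
    {g g' : GL (Fin n) ℚ_[p]} (hg : g ∈ Iminus p n * {permGL p n v⁻¹ * piPow p n μ} * Uplus p n)
    (hg' : g' ∈ Iminus p n * {permGL p n w⁻¹ * piPow p n μ} * Uplus p n)
    (hI : g * g'⁻¹ ∈ Iminus p n) : v = w := by
  obtain ⟨i, hi, u, hu, rfl⟩ := Set.mem_mul_singleton_mul.mp hg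
  obtain ⟨i', hi', u', hu', rfl⟩ := Set.mem_mul_singleton_mul.mp hg'
  refine eq_of_permGL_mul_mul_permGL_mem_Iminus
    (piPow_conj_mem_Uplus μ ((Uplus.subgroup p n).mul_mem hu ((Uplus.subgroup p n).inv_mem hu'))) ?_
  have hw : permGL p n w = (permGL p n w⁻¹)⁻¹ := by rw [permGL_inv, inv_inv]
  have key : permGL p n v⁻¹ * (piPow p n μ * (u * u'⁻¹) * (piPow p n μ)⁻¹) * permGL p n w =
      i⁻¹ * (i * (permGL p n v⁻¹ * piPow p n μ) * u *
        (i' * (permGL p n w⁻¹ * piPow p n μ) * u')⁻¹) * i' := by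
    rw [hw]; group
  rw [key]
  exact (Iminus.subgroup p n).mul_mem ((Iminus.subgroup p n).mul_mem
    ((Iminus.subgroup p n).inv_mem hi) hI) hi'

theorem Iminus_inter_subset_Kgp_inter (lam μ : Fin n → ℤ) (w : Equiv.Perm (Fin n)) :
    (Iminus p n * {permGL p n w⁻¹ * piPow p n μ} * Uplus p n) ∩
        (Iminus p n * {piPow p n lam} * Kgp p n) ⊆
      (Kgp p n * {piPow p n μ} * Uplus p n) ∩ (Kgp p n * {piPow p n lam} * Kgp p n) := by
  refine Set.inter_subset_inter (fun g hg => ?_)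
    (Set.mul_subset_mul_right (Set.mul_subset_mul_right (Iminus.subgroup_le (p := p) (n := n))))
  obtain ⟨i, hi, u, hu, rfl⟩ := Set.mem_mul_singleton_mul.mp hg
  exact Set.mem_mul_singleton_mul.mpr ⟨i * permGL p n w⁻¹,
    (Kgp.subgroup p n).mul_mem hi.1 (permGL_mem_Kgp _), u, hu, by simp only [mul_assoc]⟩

theorem exists_mem_Iminus_inter_of_mem_Kgp_inter {lam μ : Fin n → ℤ} {g : GL (Fin n) ℚ_[p]}
    (hg : g ∈ (Kgp p n * {piPow p n μ} * Uplus p n) ∩ (Kgp p n * {piPow p n lam} * Kgp p n)) :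
    ∃ w : Equiv.Perm (Fin n), ∃ g' ∈ (Iminus p n * {permGL p n w⁻¹ * piPow p n μ} * Uplus p n) ∩
      (Iminus p n * {piPow p n lam} * Kgp p n), g * g'⁻¹ ∈ Kgp p n := by
  obtain ⟨hgμ, hglam⟩ := hg
  obtain ⟨k₁, hk₁, k₂, hk₂, rfl⟩ := Set.mem_mul_singleton_mul.mp hglam
  obtain ⟨k, hk, u, hu, hg⟩ := Set.mem_mul_singleton_mul.mp hgμ
  obtain ⟨i, hi, σ, u₀, hu₀, hσ⟩ := exists_eq_Iminus_mul_permGL_mul_Uplus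
    ((Kgp.subgroup p n).mul_mem ((Kgp.subgroup p n).inv_mem hk₁) hk)
  refine ⟨σ⁻¹, k₁⁻¹ * (k₁ * piPow p n lam * k₂), ⟨Set.mem_mul_singleton_mul.mpr
    ⟨i, hi, piPow p n (-μ) * u₀ * (piPow p n (-μ))⁻¹ * u,
      (Uplus.subgroup p n).mul_mem (piPow_conj_mem_Uplus (-μ) hu₀) hu, ?_⟩,
    Set.mem_mul_singleton_mul.mpr ⟨1, (Iminus.subgroup p n).one_mem, k₂, hk₂, by group⟩⟩, ?_⟩
  · rw [← hg, ← piPow_inv, inv_inv, ← mul_assoc k₁⁻¹, ← mul_assoc k₁⁻¹, hσ]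
    group
  · rw [_root_.mul_inv_rev, inv_inv, mul_inv_cancel_left]
    exact hk₁

end GLn

open Pointwise in
theorem iwahori_level_decomposition_general (p : ℕ) [Fact p.Prime] (n : ℕ)
    (lam μ : Fin n → ℤ)
    (hreg : ∀ i j : Fin n, (j : ℕ) = (i : ℕ) + 1 → lam j < lam i) :
    Nonempty
      ({C : Set (GL (Fin n) ℚ_[p]) //
          ∃ g ∈ (Kgp p n * {piPow p n μ} * Uplus p n) ∩ (Kgp p n * {piPow p n lam} * Kgp p n),
            C = Kgp p n * {g}} ≃
        (w : Equiv.Perm (Fin n)) ×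
          {C : Set (GL (Fin n) ℚ_[p]) //
            ∃ g ∈ (Iminus p n * {permGL p n w⁻¹ * piPow p n μ} * Uplus p n) ∩
                (Iminus p n * {piPow p n lam} * Kgp p n),
              C = Iminus p n * {g}}) := by
  refine Subgroup.nonempty_equiv_sigma_cosets (K := Kgp.subgroup p n) (I := Iminus.subgroup p n)
    Iminus.subgroup_le (Iminus_inter_subset_Kgp_inter lam μ)
    (fun _ hg => exists_mem_Iminus_inter_of_mem_Kgp_inter hg) fun v w g hg g' hg' hK => ?_
  have hI := mul_inv_mem_Iminus_of_mem_Iminus_piPow_Kgp (strictAnti_of_forall_succ_lt hreg)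
    hg.2 hg'.2 hK
  exact ⟨hI, eq_of_mem_Iminus_permGL_piPow_Uplus hg.1 hg'.1 hI⟩

open Pointwise in
/-- **Iwahori level decomposition** (Lemma 5.2, type `A_{n−1}` instance): for `λ` regular
dominant, there is a bijection between `K\(K·π^{μ}·U⁺ ∩ K·π^{λ}·K)` and the disjoint union
over `w ∈ S_n` of `I⁻\(I⁻·w⁻¹·π^{μ}·U⁺ ∩ I⁻·π^{λ}·K)`. -/
theorem iwahori_level_decomposition (p : ℕ) [Fact p.Prime] (n : ℕ) (hn : 2 ≤ n)
    (lam μ : Fin n → ℤ)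
    (hreg : ∀ i j : Fin n, (j : ℕ) = (i : ℕ) + 1 → lam j < lam i) :
    Nonempty
      ({C : Set (GL (Fin n) ℚ_[p]) //
          ∃ g ∈ (Kgp p n * {piPow p n μ} * Uplus p n) ∩ (Kgp p n * {piPow p n lam} * Kgp p n),
            C = Kgp p n * {g}} ≃
        (w : Equiv.Perm (Fin n)) ×
          {C : Set (GL (Fin n) ℚ_[p]) //
            ∃ g ∈ (Iminus p n * {permGL p n w⁻¹ * piPow p n μ} * Uplus p n) ∩
                (Iminus p n * {piPow p n lam} * Kgp p n),
              C = Iminus p n * {g}}) :=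
  iwahori_level_decomposition_general p n lam μ hreg
end
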